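/- Let 0 < q < 1. For z,t ∈ ℂ with z ≠ 0 and 0 < |t| < |z|^{-1}, the bilateral series ∑_{n=-∞}^∞ t^n z^n F(z², q^{n+1}) / (q;q)_∞ converges absolutely and its sum equals (t^{-1}z;q)_∞ / (tz;q)_∞. (In ₁φ₁ notation the n-th coefficient is z^n (q^{n+1};q)_∞ ₁φ₁(0;q^{n+1};q,z²)/(q;q)_∞, a Hahn–Exton q-Bessel function.) -/

import Mathlib

open Complex Filter
open Topology

/-- `(a;q)_k`, the finite q-shifted factorial. -/
noncomputable def qPoch (q : ℝ) (a : ℂ) (k : ℕ) : ℂ :=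
  ∏ j ∈ Finset.range k, (1 - a * (q : ℂ) ^ j)

/-- `(a;q)_∞`, the infinite q-shifted factorial. -/
noncomputable def qPochInf (q : ℝ) (a : ℂ) : ℂ :=
  ∏' j : ℕ, (1 - a * (q : ℂ) ^ j)

/-- The k-th term of the entire series
`F(z,w) = ∑ (-1)^k q^{k(k-1)/2} (q^k w;q)_∞ z^k / (q;q)_k`. -/
noncomputable def Fterm (q : ℝ) (z w : ℂ) (k : ℕ) : ℂ :=
  (-1) ^ k * (q : ℂ) ^ (k * (k - 1) / 2) * qPochInf q ((q : ℂ) ^ k * w) * z ^ k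
    / qPoch q (q : ℂ) k

/-- `F(z,w) = (w;q)_∞ ₁φ₁(0;w;q,z)` as an entire function of `(z,w)`. -/
noncomputable def Fqb (q : ℝ) (z w : ℂ) : ℂ := ∑' k : ℕ, Fterm q z w k

section Aux

variable {q : ℝ}

lemma one_sub_q_pow_pos (hq0 : 0 < q) (hq1 : q < 1) (k : ℕ) : 0 < 1 - q ^ (k + 1) :=
  sub_pos.2 (pow_lt_one₀ hq0.le hq1 k.succ_ne_zero)

lemma norm_one_sub_q_pow (hq0 : 0 < q) (hq1 : q < 1) (k : ℕ) :
    ‖(1 : ℂ) - (q : ℂ) ^ (k + 1)‖ = 1 - q ^ (k + 1) := by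
  have : (1 : ℂ) - (q : ℂ) ^ (k + 1) = ((1 - q ^ (k + 1) : ℝ) : ℂ) := by push_cast; ring
  rw [this, Complex.norm_real, Real.norm_of_nonneg (one_sub_q_pow_pos hq0 hq1 k).le]

lemma one_sub_q_pow_ne (hq0 : 0 < q) (hq1 : q < 1) (k : ℕ) :
    (1 : ℂ) - (q : ℂ) ^ (k + 1) ≠ 0 := by
  intro h
  have := norm_one_sub_q_pow hq0 hq1 k
  rw [h] at this
  simp at this
  nlinarith [one_sub_q_pow_pos hq0 hq1 k]

lemma qPoch_succ (a : ℂ) (k : ℕ) :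
    qPoch q a (k + 1) = qPoch q a k * (1 - a * (q : ℂ) ^ k) :=
  Finset.prod_range_succ _ _

lemma qPoch_q_succ (k : ℕ) :
    qPoch q (q : ℂ) (k + 1) = qPoch q (q : ℂ) k * (1 - (q : ℂ) ^ (k + 1)) := by
  rw [qPoch_succ]; ring_nf

lemma qPoch_q_ne (hq0 : 0 < q) (hq1 : q < 1) (k : ℕ) : qPoch q (q : ℂ) k ≠ 0 := by
  induction k with
  | zero => simp [qPoch]
  | succ n ih =>
    rw [qPoch_q_succ]
    exact mul_ne_zero ih (one_sub_q_pow_ne hq0 hq1 n)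

lemma tri (k : ℕ) : (k + 1) * ((k + 1) - 1) / 2 = k * (k - 1) / 2 + k := by
  cases k with
  | zero => rfl
  | succ j =>
    show (j + 2) * (j + 1) / 2 = (j + 1) * j / 2 + (j + 1)
    have h : (j + 2) * (j + 1) = (j + 1) * j + 2 * (j + 1) := by ring
    rw [h, Nat.add_mul_div_left _ _ (by norm_num : (0:ℕ) < 2)]

lemma hasProd_zero_of_eq_zero {f : ℕ → ℂ} {j0 : ℕ} (h : f j0 = 0) : HasProd f 0 := by
  have hev : (fun s : Finset ℕ => ∏ j ∈ s, f j) =ᶠ[atTop] (fun _ => 0) := by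
    filter_upwards [Filter.eventually_ge_atTop {j0}] with s hs
    exact Finset.prod_eq_zero (hs (Finset.mem_singleton_self j0)) h
  exact Tendsto.congr' hev.symm tendsto_const_nhds

lemma hasProd_qPochInf (hq0 : 0 < q) (hq1 : q < 1) (a : ℂ) :
    HasProd (fun j : ℕ => 1 - a * (q : ℂ) ^ j) (qPochInf q a) := by
  by_cases hzero : ∃ j : ℕ, 1 - a * (q : ℂ) ^ j = 0
  · obtain ⟨j0, hj0⟩ := hzero
    have h0 : HasProd (fun j : ℕ => 1 - a * (q : ℂ) ^ j) 0 := hasProd_zero_of_eq_zero hj0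
    rw [qPochInf, h0.tprod_eq]
    exact h0
  · push_neg at hzero
    have hmul : Multipliable (fun j : ℕ => 1 - a * (q : ℂ) ^ j) := by
      have := (fun (h : Unit → Summable fun j : ℕ => Complex.log (1 - a * (q : ℂ) ^ j)) =>
        Complex.multipliable_of_summable_log (h ())) ?_
      · exact this
      · intro _
        have hb : ∀ᶠ j : ℕ in atTop, ‖Complex.log (1 - a * (q : ℂ) ^ j)‖ ≤
            3 / 2 * ‖a‖ * q ^ j := by
          have ht : Tendsto (fun j : ℕ => ‖a‖ * q ^ j) atTop (𝓝 0) := by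
            simpa using (tendsto_pow_atTop_nhds_zero_of_lt_one hq0.le hq1).const_mul ‖a‖
          filter_upwards [(ht.eventually_lt_const (by norm_num : (0:ℝ) < 1/2)).mono (fun j hj => hj.le)] with j hj
          have hnorm : ‖-(a * (q : ℂ) ^ j)‖ ≤ 1 / 2 := by
            rw [norm_neg, norm_mul, norm_pow, Complex.norm_real,
              Real.norm_of_nonneg hq0.le]
            exact hj
          have := Complex.norm_log_one_add_half_le_self hnorm
          rw [show (1 : ℂ) + -(a * (q:ℂ)^j) = 1 - a * (q:ℂ)^j by ring] at this
          rw [norm_neg, norm_mul, norm_pow, Complex.norm_real,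
            Real.norm_of_nonneg hq0.le] at this
          calc ‖Complex.log (1 - a * (q : ℂ) ^ j)‖ ≤ 3/2 * (‖a‖ * q ^ j) := this
            _ = 3 / 2 * ‖a‖ * q ^ j := by ring
        exact Summable.of_norm_bounded_eventually_nat
          (((summable_geometric_of_lt_one hq0.le hq1).mul_left (3 / 2 * ‖a‖))) hb
    exact hmul.hasProd

lemma tendsto_qPoch (hq0 : 0 < q) (hq1 : q < 1) (a : ℂ) :
    Tendsto (fun N => qPoch q a N) atTop (𝓝 (qPochInf q a)) :=
  (hasProd_qPochInf hq0 hq1 a).tendsto_prod_nat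


lemma qPochInf_q_split (hq0 : 0 < q) (hq1 : q < 1) (m : ℕ) :
    qPochInf q (q : ℂ) = qPoch q (q : ℂ) m * qPochInf q ((q : ℂ) ^ (m + 1)) := by
  have hkey : ∀ j : ℕ, 1 - (q:ℂ)^(m+1) * (q:ℂ)^j = 1 - (q:ℂ) * (q:ℂ)^(j+m) :=
    fun j => by rw [← pow_add]; ring
  have hsh : Multipliable (fun j : ℕ => 1 - (q : ℂ) * (q : ℂ) ^ (j + m)) :=
    (hasProd_qPochInf hq0 hq1 ((q:ℂ)^(m+1))).multipliable.congr hkey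
  have h1 : qPochInf q ((q:ℂ)^(m+1)) = ∏' j : ℕ, (1 - (q:ℂ) * (q:ℂ)^(j+m)) := by
    rw [qPochInf]
    exact tprod_congr hkey
  have h2 := Multipliable.prod_mul_tprod_nat_mul'
    (f := fun j : ℕ => 1 - (q : ℂ) * (q : ℂ) ^ j) (k := m) hsh
  rw [h1, qPochInf, ← h2, qPoch]

lemma qPochInf_zpow_zero (hq0 : 0 < q) {m : ℤ} (hm : m ≤ 0) :
    qPochInf q ((q : ℂ) ^ m) = 0 := by
  have hQ : (q : ℂ) ≠ 0 := Complex.ofReal_ne_zero.2 hq0.ne'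
  have hj0 : (1 : ℂ) - (q : ℂ) ^ m * (q : ℂ) ^ ((-m).toNat) = 0 := by
    rw [← zpow_natCast (q : ℂ) (-m).toNat, ← zpow_add₀ hQ,
      Int.toNat_of_nonneg (neg_nonneg.2 hm)]
    simp
  have h0 : HasProd (fun j : ℕ => 1 - (q : ℂ) ^ m * (q : ℂ) ^ j) 0 :=
    hasProd_zero_of_eq_zero hj0
  rw [qPochInf, h0.tprod_eq]

/-- Euler coefficients `(-1)^k q^{k(k-1)/2} / (q;q)_k`. -/
noncomputable def ec (q : ℝ) (k : ℕ) : ℂ :=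
  (-1) ^ k * (q : ℂ) ^ (k * (k - 1) / 2) / qPoch q (q : ℂ) k

lemma summable_norm_of_ratio {f : ℕ → ℂ} {ρ : ℕ → ℝ}
    (hstep : ∀ k, ‖f (k + 1)‖ ≤ ρ k * ‖f k‖) {L : ℝ}
    (hρ : Tendsto ρ atTop (𝓝 L)) (hL : L < 1) : Summable fun k => ‖f k‖ := by
  have hr : (L + 1) / 2 < 1 := by linarith
  apply summable_of_ratio_norm_eventually_le hr
  have hev : ∀ᶠ k in atTop, ρ k ≤ (L + 1) / 2 :=
    (hρ.eventually_lt_const (by linarith : L < (L + 1) / 2)).mono fun k hk => hk.le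
  filter_upwards [hev] with k hk
  rw [Real.norm_of_nonneg (norm_nonneg _), Real.norm_of_nonneg (norm_nonneg _)]
  calc ‖f (k + 1)‖ ≤ ρ k * ‖f k‖ := hstep k
    _ ≤ (L + 1) / 2 * ‖f k‖ := mul_le_mul_of_nonneg_right hk (norm_nonneg _)

lemma ec_step (hq0 : 0 < q) (hq1 : q < 1) (x : ℂ) (k : ℕ) :
    ec q (k + 1) * x ^ (k + 1) =
      (ec q k * x ^ k) * (-((q : ℂ) ^ k * x) / (1 - (q : ℂ) ^ (k + 1))) := by
  rw [ec, ec, tri, qPoch_q_succ, pow_add]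
  have h1 := qPoch_q_ne hq0 hq1 k
  have h2 := one_sub_q_pow_ne hq0 hq1 k
  field_simp
  ring

lemma norm_ratio (hq0 : 0 < q) (hq1 : q < 1) (x : ℂ) (k : ℕ) :
    ‖-((q : ℂ) ^ k * x) / (1 - (q : ℂ) ^ (k + 1))‖ = q ^ k * ‖x‖ / (1 - q ^ (k + 1)) := by
  rw [norm_div, norm_neg, norm_mul, norm_pow, Complex.norm_real,
    Real.norm_of_nonneg hq0.le, norm_one_sub_q_pow hq0 hq1]

lemma summable_norm_ec (hq0 : 0 < q) (hq1 : q < 1) (x : ℂ) :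
    Summable fun k => ‖ec q k * x ^ k‖ := by
  apply summable_norm_of_ratio (ρ := fun k => q ^ k * ‖x‖ / (1 - q ^ (k + 1)))
    (L := 0 * ‖x‖ / (1 - 0)) ?_ ?_ ?_
  · intro k
    rw [ec_step hq0 hq1 x k, norm_mul, norm_ratio hq0 hq1, mul_comm]
  · apply Tendsto.div
    · exact (tendsto_pow_atTop_nhds_zero_of_lt_one hq0.le hq1).mul_const ‖x‖
    · exact tendsto_const_nhds.sub
        ((tendsto_pow_atTop_nhds_zero_of_lt_one hq0.le hq1).comp (tendsto_add_atTop_nat 1))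
    · norm_num
  · norm_num

lemma v_step (hq0 : 0 < q) (hq1 : q < 1) (x : ℂ) (m : ℕ) :
    x ^ (m + 1) / qPoch q (q : ℂ) (m + 1) =
      (x ^ m / qPoch q (q : ℂ) m) * (x / (1 - (q : ℂ) ^ (m + 1))) := by
  rw [qPoch_q_succ, pow_succ]
  have h1 := qPoch_q_ne hq0 hq1 m
  have h2 := one_sub_q_pow_ne hq0 hq1 m
  field_simp

lemma summable_norm_v (hq0 : 0 < q) (hq1 : q < 1) {x : ℂ} (hx : ‖x‖ < 1) :
    Summable fun m => ‖x ^ m / qPoch q (q : ℂ) m‖ := by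
  apply summable_norm_of_ratio (ρ := fun m => ‖x‖ / (1 - q ^ (m + 1)))
    (L := ‖x‖ / (1 - 0)) ?_ ?_ ?_
  · intro m
    refine le_of_eq ?_
    rw [v_step hq0 hq1 x m, norm_mul, mul_comm]
    congr 1
    rw [norm_div, norm_one_sub_q_pow hq0 hq1]
  · apply Tendsto.div tendsto_const_nhds
    · exact tendsto_const_nhds.sub
        ((tendsto_pow_atTop_nhds_zero_of_lt_one hq0.le hq1).comp (tendsto_add_atTop_nat 1))
    · norm_num
  · simpa using hx

noncomputable def fE (q : ℝ) (x : ℂ) : ℂ := ∑' k : ℕ, ec q k * x ^ k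

noncomputable def gE (q : ℝ) (x : ℂ) : ℂ := ∑' m : ℕ, x ^ m / qPoch q (q : ℂ) m

lemma fE_step (hq0 : 0 < q) (hq1 : q < 1) (x : ℂ) :
    fE q x = (1 - x) * fE q ((q : ℂ) * x) := by
  have hsx : Summable fun k => ec q k * x ^ k := (summable_norm_ec hq0 hq1 x).of_norm
  have hsqx : Summable fun k => ec q k * ((q : ℂ) * x) ^ k :=
    (summable_norm_ec hq0 hq1 _).of_norm
  have hD : Summable fun k => ec q k * x ^ k - ec q k * ((q : ℂ) * x) ^ k := hsx.sub hsqx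
  have h1 : fE q x - fE q ((q : ℂ) * x)
      = ∑' k, (ec q k * x ^ k - ec q k * ((q : ℂ) * x) ^ k) :=
    (Summable.tsum_sub hsx hsqx).symm
  have h2 : ∑' k, (ec q k * x ^ k - ec q k * ((q : ℂ) * x) ^ k)
      = ∑' k, (ec q (k + 1) * x ^ (k + 1) - ec q (k + 1) * ((q : ℂ) * x) ^ (k + 1)) := by
    rw [Summable.tsum_eq_zero_add hD]
    simp
  have h3 : ∀ k : ℕ, ec q (k + 1) * x ^ (k + 1) - ec q (k + 1) * ((q : ℂ) * x) ^ (k + 1)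
      = -x * (ec q k * ((q : ℂ) * x) ^ k) := by
    intro k
    rw [ec, ec, tri, qPoch_q_succ, pow_add]
    have hn1 := qPoch_q_ne hq0 hq1 k
    have hn2 := one_sub_q_pow_ne hq0 hq1 k
    field_simp
    ring
  have h4 : fE q x - fE q ((q : ℂ) * x) = -x * fE q ((q : ℂ) * x) := by
    rw [h1, h2]
    simp only [h3]
    rw [tsum_mul_left]
    rfl
  have : fE q x = fE q ((q : ℂ) * x) + -x * fE q ((q : ℂ) * x) := by linear_combination h4
  rw [this]; ring

lemma gE_step (hq0 : 0 < q) (hq1 : q < 1) {x : ℂ} (hx : ‖x‖ < 1) :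
    gE q ((q : ℂ) * x) = (1 - x) * gE q x := by
  have hqx : ‖(q : ℂ) * x‖ < 1 := by
    rw [norm_mul, Complex.norm_real, Real.norm_of_nonneg hq0.le]
    nlinarith [norm_nonneg x]
  have hsx : Summable fun m => x ^ m / qPoch q (q : ℂ) m :=
    (summable_norm_v hq0 hq1 hx).of_norm
  have hsqx : Summable fun m => ((q : ℂ) * x) ^ m / qPoch q (q : ℂ) m :=
    (summable_norm_v hq0 hq1 hqx).of_norm
  have hD : Summable fun m => x ^ m / qPoch q (q : ℂ) m
      - ((q : ℂ) * x) ^ m / qPoch q (q : ℂ) m := hsx.sub hsqx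
  have h1 : gE q x - gE q ((q : ℂ) * x)
      = ∑' m, (x ^ m / qPoch q (q : ℂ) m - ((q : ℂ) * x) ^ m / qPoch q (q : ℂ) m) :=
    (Summable.tsum_sub hsx hsqx).symm
  have h2 : ∑' m, (x ^ m / qPoch q (q : ℂ) m - ((q : ℂ) * x) ^ m / qPoch q (q : ℂ) m)
      = ∑' m, (x ^ (m + 1) / qPoch q (q : ℂ) (m + 1)
          - ((q : ℂ) * x) ^ (m + 1) / qPoch q (q : ℂ) (m + 1)) := by
    rw [Summable.tsum_eq_zero_add hD]
    simp
  have h3 : ∀ m : ℕ, x ^ (m + 1) / qPoch q (q : ℂ) (m + 1)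
      - ((q : ℂ) * x) ^ (m + 1) / qPoch q (q : ℂ) (m + 1)
      = x * (x ^ m / qPoch q (q : ℂ) m) := by
    intro m
    rw [qPoch_q_succ]
    have hn1 := qPoch_q_ne hq0 hq1 m
    have hn2 := one_sub_q_pow_ne hq0 hq1 m
    field_simp
    ring
  have h4 : gE q x - gE q ((q : ℂ) * x) = x * gE q x := by
    rw [h1, h2]
    simp only [h3]
    rw [tsum_mul_left]
    rfl
  have : gE q ((q : ℂ) * x) = gE q x - x * gE q x := by linear_combination -h4
  rw [this]; ring

lemma norm_qpow_mul (hq0 : 0 < q) (N : ℕ) (x : ℂ) :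
    ‖(q : ℂ) ^ N * x‖ = q ^ N * ‖x‖ := by
  rw [norm_mul, norm_pow, Complex.norm_real, Real.norm_of_nonneg hq0.le]

lemma fE_iter (hq0 : 0 < q) (hq1 : q < 1) (x : ℂ) (N : ℕ) :
    fE q x = qPoch q x N * fE q ((q : ℂ) ^ N * x) := by
  induction N with
  | zero => simp [qPoch]
  | succ N ih =>
    have harg : (q : ℂ) * ((q : ℂ) ^ N * x) = (q : ℂ) ^ (N + 1) * x := by ring
    rw [ih, fE_step hq0 hq1 ((q : ℂ) ^ N * x), harg, qPoch_succ]
    ring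

lemma gE_iter (hq0 : 0 < q) (hq1 : q < 1) {x : ℂ} (hx : ‖x‖ < 1) (N : ℕ) :
    gE q x * qPoch q x N = gE q ((q : ℂ) ^ N * x) := by
  induction N with
  | zero => simp [qPoch]
  | succ N ih =>
    have hxN : ‖(q : ℂ) ^ N * x‖ < 1 := by
      rw [norm_qpow_mul hq0]
      calc q ^ N * ‖x‖ ≤ 1 * ‖x‖ := by
            exact mul_le_mul_of_nonneg_right (pow_le_one₀ hq0.le hq1.le) (norm_nonneg x)
        _ < 1 := by rwa [one_mul]
    have harg : (q : ℂ) * ((q : ℂ) ^ N * x) = (q : ℂ) ^ (N + 1) * x := by ring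
    have := gE_step hq0 hq1 hxN
    rw [harg] at this
    rw [this, ← ih, qPoch_succ]
    ring

lemma ec_zero : ec q 0 = 1 := by simp [ec, qPoch]

lemma summable_norm_ec_shift (hq0 : 0 < q) (hq1 : q < 1) :
    Summable fun k => ‖ec q (k + 1)‖ := by
  have h := (summable_norm_ec hq0 hq1 1)
  simp only [one_pow, mul_one] at h
  exact (summable_nat_add_iff 1).2 h

lemma fE_near_one (hq0 : 0 < q) (hq1 : q < 1) {y : ℂ} (hy : ‖y‖ ≤ 1) :
    ‖fE q y - 1‖ ≤ (∑' k, ‖ec q (k + 1)‖) * ‖y‖ := by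
  have hs : Summable fun k => ec q k * y ^ k := (summable_norm_ec hq0 hq1 y).of_norm
  have h0 : fE q y = ec q 0 * y ^ 0 + ∑' k, ec q (k + 1) * y ^ (k + 1) :=
    Summable.tsum_eq_zero_add hs
  rw [ec_zero] at h0
  simp only [pow_zero, one_mul] at h0
  have hsn : Summable fun k => ‖ec q (k + 1) * y ^ (k + 1)‖ :=
    (summable_nat_add_iff 1).2 (summable_norm_ec hq0 hq1 y)
  have hmaj : Summable fun k => ‖ec q (k + 1)‖ * ‖y‖ :=
    (summable_norm_ec_shift hq0 hq1).mul_right ‖y‖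
  calc ‖fE q y - 1‖ = ‖∑' k, ec q (k + 1) * y ^ (k + 1)‖ := by
        rw [h0]; congr 1; ring
    _ ≤ ∑' k, ‖ec q (k + 1) * y ^ (k + 1)‖ := norm_tsum_le_tsum_norm hsn
    _ ≤ ∑' k, ‖ec q (k + 1)‖ * ‖y‖ := by
        apply Summable.tsum_le_tsum _ hsn hmaj
        intro k
        rw [norm_mul, norm_pow]
        exact mul_le_mul_of_nonneg_left
          (pow_le_of_le_one (norm_nonneg y) hy k.succ_ne_zero)
          (norm_nonneg _)
    _ = (∑' k, ‖ec q (k + 1)‖) * ‖y‖ := tsum_mul_right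

lemma euler1 (hq0 : 0 < q) (hq1 : q < 1) (x : ℂ) : fE q x = qPochInf q x := by
  have htq : Tendsto (fun N : ℕ => q ^ N * ‖x‖) atTop (𝓝 0) := by
    simpa using (tendsto_pow_atTop_nhds_zero_of_lt_one hq0.le hq1).mul_const ‖x‖
  have htend2 : Tendsto (fun N : ℕ => fE q ((q : ℂ) ^ N * x)) atTop (𝓝 1) := by
    rw [← tendsto_sub_nhds_zero_iff]
    have hbound : ∀ᶠ N : ℕ in atTop, ‖fE q ((q : ℂ) ^ N * x) - 1‖ ≤
        (∑' k, ‖ec q (k + 1)‖) * (q ^ N * ‖x‖) := by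
      filter_upwards [(htq.eventually_lt_const one_pos).mono fun N hN => hN.le] with N hN
      have h1 : ‖(q : ℂ) ^ N * x‖ ≤ 1 := by rwa [norm_qpow_mul hq0]
      have := fE_near_one hq0 hq1 h1
      rwa [norm_qpow_mul hq0] at this
    have htend0 : Tendsto (fun N : ℕ => (∑' k, ‖ec q (k + 1)‖) * (q ^ N * ‖x‖)) atTop (𝓝 0) := by
      simpa using htq.const_mul (∑' k, ‖ec q (k + 1)‖)
    exact squeeze_zero_norm' hbound htend0
  have hfull : Tendsto (fun N : ℕ => qPoch q x N * fE q ((q : ℂ) ^ N * x)) atTop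
      (𝓝 (qPochInf q x * 1)) := (tendsto_qPoch hq0 hq1 x).mul htend2
  have hconst : (fun N : ℕ => qPoch q x N * fE q ((q : ℂ) ^ N * x))
      = fun _ : ℕ => fE q x := by
    funext N
    exact (fE_iter hq0 hq1 x N).symm
  rw [hconst] at hfull
  have := tendsto_nhds_unique tendsto_const_nhds hfull
  simpa using this

lemma summable_norm_half_shift (hq0 : 0 < q) (hq1 : q < 1) :
    Summable fun m => ‖((1 : ℂ) / 2) ^ m / qPoch q (q : ℂ) (m + 1)‖ := by
  have hx : ‖((1 : ℂ) / 2)‖ < 1 := by norm_num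
  have h := (summable_nat_add_iff 1).2 (summable_norm_v hq0 hq1 hx)
  have h2 := h.mul_left 2
  apply h2.congr
  intro m
  have : ((1 : ℂ) / 2) ^ m = 2 * ((1 : ℂ) / 2) ^ (m + 1) := by ring
  rw [this, mul_div_assoc, norm_mul]
  norm_num

lemma gE_near_one (hq0 : 0 < q) (hq1 : q < 1) {y : ℂ} (hy : ‖y‖ ≤ 1 / 2) :
    ‖gE q y - 1‖ ≤ (∑' m, ‖((1 : ℂ) / 2) ^ m / qPoch q (q : ℂ) (m + 1)‖) * ‖y‖ := by
  have hy1 : ‖y‖ < 1 := lt_of_le_of_lt hy (by norm_num)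
  have hs : Summable fun m => y ^ m / qPoch q (q : ℂ) m :=
    (summable_norm_v hq0 hq1 hy1).of_norm
  have h0 : gE q y = y ^ 0 / qPoch q (q : ℂ) 0 + ∑' m, y ^ (m + 1) / qPoch q (q : ℂ) (m + 1) :=
    Summable.tsum_eq_zero_add hs
  have hP0 : qPoch q (q : ℂ) 0 = 1 := by simp [qPoch]
  rw [hP0] at h0
  simp only [pow_zero, div_one] at h0
  have hsn : Summable fun m => ‖y ^ (m + 1) / qPoch q (q : ℂ) (m + 1)‖ :=
    (summable_nat_add_iff 1).2 (summable_norm_v hq0 hq1 hy1)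
  have hmaj : Summable fun m => ‖((1 : ℂ) / 2) ^ m / qPoch q (q : ℂ) (m + 1)‖ * ‖y‖ :=
    (summable_norm_half_shift hq0 hq1).mul_right ‖y‖
  calc ‖gE q y - 1‖ = ‖∑' m, y ^ (m + 1) / qPoch q (q : ℂ) (m + 1)‖ := by
        rw [h0]; congr 1; ring
    _ ≤ ∑' m, ‖y ^ (m + 1) / qPoch q (q : ℂ) (m + 1)‖ := norm_tsum_le_tsum_norm hsn
    _ ≤ ∑' m, ‖((1 : ℂ) / 2) ^ m / qPoch q (q : ℂ) (m + 1)‖ * ‖y‖ := by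
        apply Summable.tsum_le_tsum _ hsn hmaj
        intro m
        rw [norm_div, norm_div, norm_pow, norm_pow, pow_succ, div_mul_eq_mul_div]
        gcongr
        rw [show ‖(1:ℂ)/2‖ = 1/2 by norm_num]
        exact hy
    _ = (∑' m, ‖((1 : ℂ) / 2) ^ m / qPoch q (q : ℂ) (m + 1)‖) * ‖y‖ := tsum_mul_right

lemma euler2 (hq0 : 0 < q) (hq1 : q < 1) {x : ℂ} (hx : ‖x‖ < 1) :
    gE q x * qPochInf q x = 1 := by
  have htq : Tendsto (fun N : ℕ => q ^ N * ‖x‖) atTop (𝓝 0) := by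
    simpa using (tendsto_pow_atTop_nhds_zero_of_lt_one hq0.le hq1).mul_const ‖x‖
  have htend2 : Tendsto (fun N : ℕ => gE q ((q : ℂ) ^ N * x)) atTop (𝓝 1) := by
    rw [← tendsto_sub_nhds_zero_iff]
    have hbound : ∀ᶠ N : ℕ in atTop, ‖gE q ((q : ℂ) ^ N * x) - 1‖ ≤
        (∑' m, ‖((1 : ℂ) / 2) ^ m / qPoch q (q : ℂ) (m + 1)‖) * (q ^ N * ‖x‖) := by
      filter_upwards [(htq.eventually_lt_const (by norm_num : (0:ℝ) < 1/2)).mono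
        fun N hN => hN.le] with N hN
      have h1 : ‖(q : ℂ) ^ N * x‖ ≤ 1 / 2 := by rwa [norm_qpow_mul hq0]
      have := gE_near_one hq0 hq1 h1
      rwa [norm_qpow_mul hq0] at this
    have htend0 : Tendsto (fun N : ℕ =>
        (∑' m, ‖((1 : ℂ) / 2) ^ m / qPoch q (q : ℂ) (m + 1)‖) * (q ^ N * ‖x‖)) atTop (𝓝 0) := by
      simpa using htq.const_mul (∑' m, ‖((1 : ℂ) / 2) ^ m / qPoch q (q : ℂ) (m + 1)‖)
    exact squeeze_zero_norm' hbound htend0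
  have hfull : Tendsto (fun N : ℕ => gE q x * qPoch q x N) atTop
      (𝓝 (gE q x * qPochInf q x)) := (tendsto_qPoch hq0 hq1 x).const_mul _
  have hconst : (fun N : ℕ => gE q x * qPoch q x N)
      = fun N : ℕ => gE q ((q : ℂ) ^ N * x) := by
    funext N
    exact gE_iter hq0 hq1 hx N
  rw [hconst] at hfull
  exact tendsto_nhds_unique hfull htend2

lemma qPochInf_q_ne (hq0 : 0 < q) (hq1 : q < 1) : qPochInf q (q : ℂ) ≠ 0 := by
  have hx : ‖(q : ℂ)‖ < 1 := by
    rw [Complex.norm_real, Real.norm_of_nonneg hq0.le]; exact hq1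
  intro h
  have := euler2 hq0 hq1 hx
  rw [h, mul_zero] at this
  exact one_ne_zero this.symm


section Main

variable {q : ℝ} {z t : ℂ}

lemma key1 (hq0 : 0 < q) (hq1 : q < 1) (hz : z ≠ 0) (ht : t ≠ 0) (k m : ℕ) :
    t ^ ((m : ℤ) - k) * z ^ ((m : ℤ) - k) * Fterm q (z ^ 2) ((q : ℂ) ^ (((m : ℤ) - k) + 1)) k
      / qPochInf q (q : ℂ)
    = (ec q k * (t⁻¹ * z) ^ k) * ((t * z) ^ m / qPoch q (q : ℂ) m) := by
  have hQ : (q : ℂ) ≠ 0 := Complex.ofReal_ne_zero.2 hq0.ne'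
  have hw : (q : ℂ) ^ (k : ℕ) * (q : ℂ) ^ (((m : ℤ) - k) + 1) = (q : ℂ) ^ (m + 1 : ℕ) := by
    rw [← zpow_natCast (q : ℂ) k, ← zpow_add₀ hQ, ← zpow_natCast (q : ℂ) (m + 1)]
    congr 1
    push_cast
    ring
  have hsplit : qPochInf q ((q : ℂ) ^ (m + 1)) * qPoch q (q : ℂ) m = qPochInf q (q : ℂ) := by
    rw [mul_comm]
    exact (qPochInf_q_split hq0 hq1 m).symm
  have hzpt : t ^ ((m : ℤ) - k) = t ^ m / t ^ k := by
    rw [zpow_sub₀ ht, zpow_natCast, zpow_natCast]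
  have hzpz : z ^ ((m : ℤ) - k) = z ^ m / z ^ k := by
    rw [zpow_sub₀ hz, zpow_natCast, zpow_natCast]
  have h1 := qPoch_q_ne hq0 hq1 k
  have h2 := qPoch_q_ne hq0 hq1 m
  have h3 := qPochInf_q_ne hq0 hq1
  have h4 : qPochInf q ((q : ℂ) ^ (m + 1)) ≠ 0 := by
    intro h
    rw [h, zero_mul] at hsplit
    exact h3 hsplit.symm
  rw [Fterm, hw, ec, hzpt, hzpz]
  set W := qPochInf q ((q : ℂ) ^ (m + 1)) with hWdef
  set Pk := qPoch q (q : ℂ) k with hPkdef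
  set Pm := qPoch q (q : ℂ) m with hPmdef
  rw [← hsplit]
  field_simp
  have hden : t ^ k * z ^ k * Pk * (W * Pm) ≠ 0 :=
    mul_ne_zero (mul_ne_zero (mul_ne_zero (pow_ne_zero _ ht) (pow_ne_zero _ hz)) h1)
      (mul_ne_zero h4 h2)
  rw [div_pow]
  field_simp
  ring

lemma key2 (hq0 : 0 < q) (hq1 : q < 1) (n : ℤ) (k : ℕ) (hnk : n + k < 0) :
    t ^ n * z ^ n * Fterm q (z ^ 2) ((q : ℂ) ^ (n + 1)) k / qPochInf q (q : ℂ) = 0 := by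
  have hQ : (q : ℂ) ≠ 0 := Complex.ofReal_ne_zero.2 hq0.ne'
  have hw : (q : ℂ) ^ (k : ℕ) * (q : ℂ) ^ (n + 1) = (q : ℂ) ^ ((k : ℤ) + n + 1) := by
    rw [← zpow_natCast (q : ℂ) k, ← zpow_add₀ hQ]
    congr 1
    ring
  have hz : qPochInf q ((q : ℂ) ^ ((k : ℤ) + n + 1)) = 0 :=
    qPochInf_zpow_zero hq0 (by omega)
  rw [Fterm, hw, hz]
  simp

end Main


/-- Proposition 2.5 (generating function): for `0 < |t| < |z|⁻¹`,
`(t⁻¹z;q)_∞/(tz;q)_∞ = ∑_{n∈ℤ} tⁿ zⁿ (q^{n+1};q)_∞ ₁φ₁(0;q^{n+1};q,z²)/(q;q)_∞`,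
with absolute convergence. -/
theorem stmt3 (q : ℝ) (hq0 : 0 < q) (hq1 : q < 1) (z t : ℂ) (hz : z ≠ 0)
    (ht0 : 0 < ‖t‖) (ht1 : ‖t‖ < (‖z‖)⁻¹) :
    (Summable fun n : ℤ =>
      ‖t ^ n * z ^ n * Fqb q (z ^ 2) ((q : ℂ) ^ (n + 1)) / qPochInf q (q : ℂ)‖) ∧
    ∑' n : ℤ, t ^ n * z ^ n * Fqb q (z ^ 2) ((q : ℂ) ^ (n + 1)) / qPochInf q (q : ℂ) =
      qPochInf q (t⁻¹ * z) / qPochInf q (t * z) := by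
  have ht : t ≠ 0 := by
    intro h
    rw [h] at ht0
    simp at ht0
  have htz : ‖t * z‖ < 1 := by
    rw [norm_mul]
    have hz0 : 0 < ‖z‖ := norm_pos_iff.2 hz
    calc ‖t‖ * ‖z‖ < (‖z‖)⁻¹ * ‖z‖ :=
          mul_lt_mul_of_pos_right ht1 hz0
      _ = 1 := inv_mul_cancel₀ hz0.ne'
  -- the ℤ×ℕ-indexed family
  set A : ℤ × ℕ → ℂ := fun p =>
    t ^ p.1 * z ^ p.1 * Fterm q (z ^ 2) ((q : ℂ) ^ (p.1 + 1)) p.2 / qPochInf q (q : ℂ)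
    with hAdef
  set u : ℕ → ℂ := fun k => ec q k * (t⁻¹ * z) ^ k with hudef
  set v : ℕ → ℂ := fun m => (t * z) ^ m / qPoch q (q : ℂ) m with hvdef
  have hu : Summable fun k => ‖u k‖ := summable_norm_ec hq0 hq1 _
  have hv : Summable fun m => ‖v m‖ := summable_norm_v hq0 hq1 htz
  have hB : Summable fun p : ℕ × ℕ => ‖u p.1 * v p.2‖ := by
    have := hu.mul_of_nonneg hv (fun k => norm_nonneg _) (fun m => norm_nonneg _)
    exact this.congr fun p => (norm_mul _ _).symm
  have hkey1 : ∀ k m : ℕ, A ((m : ℤ) - k, k) = u k * v m := fun k m =>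
    key1 hq0 hq1 hz ht k m
  have hkey2 : ∀ p : ℤ × ℕ, p.1 + (p.2 : ℤ) < 0 → A p = 0 := fun p hp =>
    key2 hq0 hq1 p.1 p.2 hp
  set iF : ℕ × ℕ → ℤ × ℕ := fun p => ((p.2 : ℤ) - p.1, p.1) with hiFdef
  have hinj : Function.Injective iF := by
    intro p p' h
    simp only [hiFdef, Prod.mk.injEq] at h
    obtain ⟨h1, h2⟩ := h
    have : p.2 = p'.2 := by omega
    exact Prod.ext (by omega) this
  have hmem : ∀ p : ℤ × ℕ, 0 ≤ p.1 + p.2 → p ∈ Set.range iF := by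
    intro p h
    refine ⟨(p.2, (p.1 + p.2).toNat), ?_⟩
    simp only [hiFdef]
    refine Prod.ext ?_ rfl
    simp only
    omega
  have hvan : ∀ p ∉ Set.range iF, A p = 0 := by
    intro p hp
    by_contra hA0
    exact hp (hmem p (by by_contra h; exact hA0 (hkey2 p (by omega))))
  have hiFim : ∀ p : ℕ × ℕ, A (iF p) = u p.1 * v p.2 := fun p => hkey1 p.1 p.2
  have hAnorm : Summable fun p : ℤ × ℕ => ‖A p‖ := by
    refine (Function.Injective.summable_iff hinj ?_).1 ?_
    · intro p hp
      rw [hvan p hp, norm_zero]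
    · exact hB.congr fun p => by rw [Function.comp_apply, hiFim]
  have hA : Summable A := hAnorm.of_norm
  -- identification of the double sum with the product of Euler sums
  have T1 : ∑' p : ℤ × ℕ, A p = ∑' p : ℕ × ℕ, u p.1 * v p.2 := by
    apply tsum_eq_tsum_of_ne_zero_bij (fun x => iF x.1)
    · intro x y h
      exact Subtype.ext (hinj h)
    · intro p hp
      have h0 : 0 ≤ p.1 + p.2 := by
        by_contra h
        exact hp (hkey2 p (by omega))
      obtain ⟨p', hp'⟩ := hmem p h0
      have hne : u p'.1 * v p'.2 ≠ 0 := by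
        rw [← hiFim p', hp']
        exact hp
      exact ⟨⟨p', hne⟩, hp'⟩
    · intro x
      exact hiFim x.1
  have T2 : ∑' p : ℕ × ℕ, u p.1 * v p.2 = (∑' k, u k) * ∑' m, v m :=
    (tsum_mul_tsum_of_summable_norm hu hv).symm
  have T3 : (∑' k, u k) = qPochInf q (t⁻¹ * z) := euler1 hq0 hq1 _
  have hgz : qPochInf q (t * z) ≠ 0 := by
    intro h
    have := euler2 hq0 hq1 htz
    rw [h, mul_zero] at this
    exact one_ne_zero this.symm
  have T4 : (∑' m, v m) = 1 / qPochInf q (t * z) := by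
    have := euler2 hq0 hq1 htz
    have hgE : gE q (t * z) = ∑' m, v m := rfl
    rw [hgE] at this
    field_simp [hgz] at this ⊢
    linear_combination this
  -- Fubini
  have hslice : ∀ n : ℤ, Summable fun k => A (n, k) := fun n => hA.prod_factor n
  have T5 : ∑' p : ℤ × ℕ, A p = ∑' n : ℤ, ∑' k : ℕ, A (n, k) := Summable.tsum_prod' hA hslice
  have T6 : ∀ n : ℤ, ∑' k : ℕ, A (n, k) =
      t ^ n * z ^ n * Fqb q (z ^ 2) ((q : ℂ) ^ (n + 1)) / qPochInf q (q : ℂ) := by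
    intro n
    have h1 : ∀ k : ℕ, A (n, k) =
        (t ^ n * z ^ n / qPochInf q (q : ℂ)) * Fterm q (z ^ 2) ((q : ℂ) ^ (n + 1)) k := by
      intro k
      simp only [hAdef]
      ring
    rw [tsum_congr h1, tsum_mul_left]
    rw [show (∑' k : ℕ, Fterm q (z ^ 2) ((q : ℂ) ^ (n + 1)) k)
      = Fqb q (z ^ 2) ((q : ℂ) ^ (n + 1)) from rfl]
    ring
  have hslicenorm : ∀ n : ℤ, Summable fun k => ‖A (n, k)‖ := fun n =>
    ((summable_prod_of_nonneg fun p => norm_nonneg (A p)).1 hAnorm).1 n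
  have hsum2 : Summable fun n : ℤ => ∑' k : ℕ, ‖A (n, k)‖ :=
    ((summable_prod_of_nonneg fun p => norm_nonneg (A p)).1 hAnorm).2
  constructor
  · apply Summable.of_nonneg_of_le (fun n => norm_nonneg _) ?_ hsum2
    intro n
    rw [← T6 n]
    exact norm_tsum_le_tsum_norm (hslicenorm n)
  · calc ∑' n : ℤ, t ^ n * z ^ n * Fqb q (z ^ 2) ((q : ℂ) ^ (n + 1)) / qPochInf q (q : ℂ)
        = ∑' n : ℤ, ∑' k : ℕ, A (n, k) := by
          exact tsum_congr fun n => (T6 n).symm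
      _ = ∑' p : ℤ × ℕ, A p := T5.symm
      _ = (∑' k, u k) * ∑' m, v m := by rw [T1, T2]
      _ = qPochInf q (t⁻¹ * z) / qPochInf q (t * z) := by
          rw [T3, T4]
          ring
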